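/- Let $(a_m)_{m\ge 0}$ be a sequence of real numbers and $c \in (0,1)$ such that for every $m \ge 0$, $|a_m| \ge c \sum_{j \ge m} |a_j|$ (where the sum is assumed finite). Then, setting $\lambda = 1 - c$, we have $|a_m| \le |a_0| \lambda^m / c$ for all $m \ge 0$. -/
import Mathlib


/-- de Boor's discrete exponential decay lemma: if `|a m| ≥ c * ∑_{j ≥ m} |a j|`
for all `m`, with `c ∈ (0,1)`, then `|a m| ≤ |a 0| * (1-c)^m / c`. -/
theorem deBoor_lemma (a : ℕ → ℝ) (c : ℝ) (hc : c ∈ Set.Ioo (0 : ℝ) 1)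
    (hsum : Summable (fun j => |a j|))
    (hcond : ∀ m, c * (∑' j : ℕ, |a (m + j)|) ≤ |a m|) :
    ∀ m, |a m| ≤ |a 0| * (1 - c) ^ m / c := by
  obtain ⟨hc0, hc1⟩ := hc
  set S : ℕ → ℝ := fun m => ∑' j : ℕ, |a (m + j)| with hS
  have hsumm : ∀ m, Summable (fun j => |a (m + j)|) := fun m =>
    hsum.comp_injective (add_right_injective m)
  have hsplit : ∀ m, S m = |a m| + S (m + 1) := by
    intro m
    have := Summable.tsum_eq_zero_add (hsumm m)
    simp only [add_zero] at this
    rw [hS]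
    simp only
    rw [this]
    congr 1
    apply tsum_congr
    intro j
    have : m + (j + 1) = m + 1 + j := by omega
    rw [this]
  have hSnonneg : ∀ m, 0 ≤ S m := fun m => tsum_nonneg (fun j => abs_nonneg _)
  have hstep : ∀ m, S (m + 1) ≤ (1 - c) * S m := by
    intro m
    have h := hcond m
    have := hsplit m
    nlinarith [hSnonneg m]
  have hSle : ∀ m, S m ≤ (1 - c) ^ m * S 0 := by
    intro m
    induction m with
    | zero => simp
    | succ n ih =>
      calc S (n + 1) ≤ (1 - c) * S n := hstep n
        _ ≤ (1 - c) * ((1 - c) ^ n * S 0) := by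
            apply mul_le_mul_of_nonneg_left ih (by linarith)
        _ = (1 - c) ^ (n + 1) * S 0 := by ring
  have haS : ∀ m, |a m| ≤ S m := by
    intro m
    have := hsplit m
    have := hSnonneg (m + 1)
    linarith
  have hS0 : S 0 ≤ |a 0| / c := by
    have h := hcond 0
    rw [le_div_iff₀ hc0]
    nlinarith
  intro m
  calc |a m| ≤ S m := haS m
    _ ≤ (1 - c) ^ m * S 0 := hSle m
    _ ≤ (1 - c) ^ m * (|a 0| / c) := by
        apply mul_le_mul_of_nonneg_left hS0 (pow_nonneg (by linarith) m)
    _ = |a 0| * (1 - c) ^ m / c := by ring
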